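/- Affine case of Lemma 3.24 (classification of coincidences of the coding map): Let (g_1,…,g_m), g_i(z) = a_i z + b_i with |a_i| > 1, have limit set J, coding map π and fixed points p_j = −b_j/(a_j − 1), and suppose conditions (i), (ii), (iii) hold. If ω, τ ∈ Σ_m satisfy ω_1 ≠ τ_1 and π(ω) = π(τ), then, setting i = ω_1 and j = τ_1, the point x = π(ω) lies in φ_i(J) ∩ φ_j(J), one has g_i(x) = p_{α_{ij}} and g_j(x) = p_{α_{ji}}, and the sequences have constant tails: σω = (α_{ij})^∞ = (α_{ij}, α_{ij}, α_{ij}, …) and στ = (α_{ji})^∞. -/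

import Mathlib

open MeasureTheory Filter Set Metric ENNReal

/-- `affineIter a b ω n = φ_{ω₁} ∘ ⋯ ∘ φ_{ω_n} (0)`, where `φ_i(z) = (z - b i)/(a i)`
is the inverse of the affine map `g_i(z) = a i * z + b i`. -/
noncomputable def affineIter {m : ℕ} (a b : Fin m → ℂ) (ω : ℕ → Fin m) (n : ℕ) : ℂ :=
  (List.range n).foldr (fun k z => (z - b (ω k)) / a (ω k)) 0

/-- The coding map `π(ω) = lim_{n→∞} φ_{ω₁} ∘ ⋯ ∘ φ_{ω_n}(0)`. -/
noncomputable def codingMap {m : ℕ} (a b : Fin m → ℂ) (ω : ℕ → Fin m) : ℂ :=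
  limUnder atTop (affineIter a b ω)

/-- The limit set `J = π(Σ_m)`, i.e. the Julia set of the semigroup `⟨g_1,…,g_m⟩`. -/
noncomputable def limitSet {m : ℕ} (a b : Fin m → ℂ) : Set ℂ :=
  Set.range (codingMap a b)

/-- The transversality condition (TC) for a family of expanding affine systems over `U`:
there is `C₁ > 0` such that for every `r ∈ (0, D]` and all `ω, τ` with distinct first
symbols, `Leb {λ ∈ U : |π_λ(ω) - π_λ(τ)| ≤ r} ≤ C₁ r²`. -/
def TCond {m : ℕ} {E : Type*} [MeasurableSpace E] (μ : Measure E)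
    (U : Set E) (a b : E → Fin m → ℂ) (D : ℝ) : Prop :=
  ∃ C₁ > (0:ℝ), ∀ r ∈ Set.Ioc (0:ℝ) D, ∀ ω τ : ℕ → Fin m, ω 0 ≠ τ 0 →
    μ {l ∈ U | ‖codingMap (a l) (b l) ω - codingMap (a l) (b l) τ‖ ≤ r}
      ≤ ENNReal.ofReal (C₁ * r ^ 2)

/-- The strong transversality condition (STC), with real parameter dimension `d`:
there is `C₁' > 0` such that for every `r ∈ (0, D]` and all `ω, τ` with distinct first
symbols, the set `{λ ∈ U : |π_λ(ω) - π_λ(τ)| ≤ r}` can be covered by at most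
`C₁' r^(2-d)` balls of radius `r`. -/
def STCond {m : ℕ} {E : Type*} [PseudoMetricSpace E]
    (U : Set E) (a b : E → Fin m → ℂ) (D : ℝ) (d : ℝ) : Prop :=
  ∃ C > (0:ℝ), ∀ r ∈ Set.Ioc (0:ℝ) D, ∀ ω τ : ℕ → Fin m, ω 0 ≠ τ 0 →
    ∃ S : Finset E, (S.card : ℝ) ≤ C * r ^ ((2:ℝ) - d) ∧
      {l ∈ U | ‖codingMap (a l) (b l) ω - codingMap (a l) (b l) τ‖ ≤ r}
        ⊆ ⋃ x ∈ S, Metric.closedBall x r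

/-- The analytic transversality condition (ATC) for a holomorphic family of expanding
affine systems: whenever `π_λ(ω) = π_λ(τ)` with `ω₁ ≠ τ₁`, the complex gradient of
`λ ↦ π_λ(ω) - π_λ(τ)` at `λ` is nonzero. -/
def ATCond {m : ℕ} {E : Type*} [NormedAddCommGroup E] [NormedSpace ℂ E]
    (U : Set E) (a b : E → Fin m → ℂ) : Prop :=
  ∀ ω τ : ℕ → Fin m, ω 0 ≠ τ 0 → ∀ l ∈ U,
    codingMap (a l) (b l) ω = codingMap (a l) (b l) τ →
    fderiv ℂ (fun μ => codingMap (a μ) (b μ) ω - codingMap (a μ) (b μ) τ) l ≠ 0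

open Topology

/-!
The affine maps `g_i` expand by at least `min ‖a i‖ > 1`, so `π` is well defined and satisfies
`g_{ω₀}(π ω) = π(σω)`. If `π ω = π τ` with `ω₀ ≠ τ₀`, the common point lies in
`φ_{ω₀}(J) ∩ φ_{τ₀}(J)`, so by (i) `π(σω) = g_{ω₀}(π ω)` is the fixed point `p_{α ω₀ τ₀}`.
A sequence coding a fixed point `p_β` must start with `β`: otherwise its shift codes
`g_k(p_β) ∈ J` with `k ≠ β`, contradicting (iii). Since `g_β(p_β) = p_β`, the shifted sequence
codes `p_β` again, and induction gives the constant tail.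
-/

section CodingMap

variable {m : ℕ} (a b : Fin m → ℂ)

lemma affineIter_succ (ω : ℕ → Fin m) (n : ℕ) :
    affineIter a b ω (n + 1) = (affineIter a b (fun k => ω (k + 1)) n - b (ω 0)) / a (ω 0) := by
  simp only [affineIter, List.range_succ_eq_map, List.foldr_cons, List.foldr_map]

lemma dist_affineIter_succ_le {ρ C : ℝ} (hρ : ∀ i, ‖a i‖⁻¹ ≤ ρ) (hC : ∀ i, ‖b i / a i‖ ≤ C)
    (n : ℕ) (ω : ℕ → Fin m) :
    dist (affineIter a b ω n) (affineIter a b ω (n + 1)) ≤ C * ρ ^ n := by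
  induction n generalizing ω with
  | zero =>
    simpa [affineIter_succ, affineIter, dist_eq_norm, neg_div] using hC (ω 0)
  | succ n ih =>
    set η : ℕ → Fin m := fun k => ω (k + 1)
    have hdiff : affineIter a b ω (n + 1) - affineIter a b ω (n + 2)
        = (affineIter a b η n - affineIter a b η (n + 1)) / a (ω 0) := by
      rw [affineIter_succ, affineIter_succ]; ring
    rw [dist_eq_norm, hdiff, norm_div, div_eq_mul_inv, pow_succ, ← mul_assoc, ← dist_eq_norm]
    exact mul_le_mul (ih η) (hρ _) (by positivity) (dist_nonneg.trans (ih η))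

variable {a} (haexp : ∀ i, 1 < ‖a i‖)
include haexp

lemma tendsto_affineIter_codingMap (ω : ℕ → Fin m) :
    Tendsto (affineIter a b ω) atTop (𝓝 (codingMap a b ω)) := by
  have : Nonempty (Fin m) := ⟨ω 0⟩
  obtain ⟨i₀, hρ⟩ := Finite.exists_max fun i => ‖a i‖⁻¹
  obtain ⟨C, hC⟩ := Finite.exists_le fun i => ‖b i / a i‖
  have hρ1 : ‖a i₀‖⁻¹ < 1 := inv_lt_one_of_one_lt₀ (haexp i₀)
  obtain ⟨x, hx⟩ := cauchySeq_tendsto_of_complete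
    (cauchySeq_of_le_geometric _ C hρ1 fun n => dist_affineIter_succ_le a b hρ hC n ω)
  rwa [codingMap, hx.limUnder_eq]

lemma codingMap_eq_div (ω : ℕ → Fin m) :
    codingMap a b ω = (codingMap a b (fun k => ω (k + 1)) - b (ω 0)) / a (ω 0) := by
  refine Tendsto.limUnder_eq ?_
  rw [← Filter.tendsto_add_atTop_iff_nat 1]
  simp only [affineIter_succ]
  exact ((tendsto_affineIter_codingMap b haexp _).sub_const _).div_const _

lemma mul_codingMap_add_eq_codingMap_shift (ω : ℕ → Fin m) :
    a (ω 0) * codingMap a b ω + b (ω 0) = codingMap a b (fun k => ω (k + 1)) := by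
  have ha : a (ω 0) ≠ 0 := norm_pos_iff.mp (one_pos.trans (haexp _))
  rw [codingMap_eq_div b haexp ω]
  field_simp
  ring

lemma eq_of_codingMap_eq_fixedPoint {β : Fin m} {x : ℂ} (hx : a β * x + b β = x)
    (hnotin : ∀ k, k ≠ β → a k * x + b k ∉ limitSet a b) {η : ℕ → Fin m}
    (hη : codingMap a b η = x) (n : ℕ) : η n = β := by
  have hhead : ∀ η : ℕ → Fin m, a (η 0) * x + b (η 0) = codingMap a b (fun k => η (k + 1)) →
      η 0 = β := fun η h => by
    by_contra hne
    exact hnotin (η 0) hne (h ▸ mem_range_self _)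
  induction n generalizing η with
  | zero => exact hhead η (hη ▸ mul_codingMap_add_eq_codingMap_shift b haexp η)
  | succ n ih =>
    have h := hη ▸ mul_codingMap_add_eq_codingMap_shift b haexp η
    refine ih (η := fun k => η (k + 1)) ?_
    rw [← h, hhead η h, hx]

end CodingMap

lemma mul_neg_div_sub_one_add {a : ℂ} (ha : a ≠ 1) (b : ℂ) :
    a * (-b / (a - 1)) + b = -b / (a - 1) := by
  have : a - 1 ≠ 0 := sub_ne_zero.mpr ha
  field_simp
  ring

theorem stmt12_general {m : ℕ} (a b : Fin m → ℂ)
    (haexp : ∀ i, 1 < ‖a i‖)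
    (J : Set ℂ) (hJ : J = limitSet a b)
    (φ : Fin m → ℂ → ℂ) (hφ : ∀ i z, φ i z = (z - b i) / a i)
    (p : Fin m → ℂ) (hp : ∀ j, p j = -b j / (a j - 1))
    (α : Fin m → Fin m → Fin m)
    -- condition (i)
    (hi : ∀ i j, i ≠ j → ∀ x ∈ (φ i '' J) ∩ (φ j '' J), a i * x + b i = p (α i j))
    -- condition (iii)
    (hiii : ∀ j k, j ≠ k → a k * p j + b k ∉ J) :
    ∀ ω τ : ℕ → Fin m, ω 0 ≠ τ 0 → codingMap a b ω = codingMap a b τ →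
      codingMap a b ω ∈ (φ (ω 0) '' J) ∩ (φ (τ 0) '' J) ∧
      a (ω 0) * codingMap a b ω + b (ω 0) = p (α (ω 0) (τ 0)) ∧
      a (τ 0) * codingMap a b ω + b (τ 0) = p (α (τ 0) (ω 0)) ∧
      (∀ n : ℕ, 1 ≤ n → ω n = α (ω 0) (τ 0)) ∧
      (∀ n : ℕ, 1 ≤ n → τ n = α (τ 0) (ω 0)) := by
  subst hJ
  intro ω τ hne hπ
  have hcode : ∀ η : ℕ → Fin m, φ (η 0) (codingMap a b (fun k => η (k + 1))) = codingMap a b η :=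
    fun η => by rw [hφ, codingMap_eq_div b haexp η]
  have hmem : codingMap a b ω ∈ (φ (ω 0) '' limitSet a b) ∩ (φ (τ 0) '' limitSet a b) :=
    ⟨⟨_, mem_range_self _, hcode ω⟩, ⟨_, mem_range_self _, hπ ▸ hcode τ⟩⟩
  have hxω := hi _ _ hne _ hmem
  have hxτ := hi _ _ hne.symm _ hmem.symm
  have hconst : ∀ (β : Fin m) (η : ℕ → Fin m),
      a (η 0) * codingMap a b η + b (η 0) = p β → ∀ n, 1 ≤ n → η n = β := by
    intro β η hη n hn
    obtain ⟨k, rfl⟩ := Nat.exists_eq_add_of_le' hn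
    refine eq_of_codingMap_eq_fixedPoint b haexp (η := fun k => η (k + 1)) (x := p β) ?_
      (fun k hk => hiii β k hk.symm) ?_ k
    · rw [hp]
      exact mul_neg_div_sub_one_add (fun h => (haexp β).ne' (by simp [h])) _
    · rw [← hη, mul_codingMap_add_eq_codingMap_shift b haexp]
  exact ⟨hmem, hxω, hxτ, hconst _ ω hxω, hconst _ τ (hπ ▸ hxτ)⟩

/-- **Affine case of Lemma 3.24** (classification of coincidences of the coding map).
Let `g_i(z) = a_i z + b_i` with `|a_i| > 1`, with limit set `J`, coding map `π`,
inverse branches `φ_i(z) = (z - b_i)/a_i` and fixed points `p_j = -b_j/(a_j - 1)`,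
satisfying conditions (i), (ii), (iii). If `ω₁ ≠ τ₁` and `π(ω) = π(τ)` then, with
`i = ω₁`, `j = τ₁` and `x = π(ω)`, we have `x ∈ φ_i(J) ∩ φ_j(J)`, `g_i(x) = p_{α i j}`,
`g_j(x) = p_{α j i}`, and `σω = (α i j)^∞`, `στ = (α j i)^∞`. -/
theorem stmt12 {m : ℕ} (hm : 2 ≤ m) (a b : Fin m → ℂ)
    (haexp : ∀ i, 1 < ‖a i‖)
    (J : Set ℂ) (hJ : J = limitSet a b)
    (φ : Fin m → ℂ → ℂ) (hφ : ∀ i z, φ i z = (z - b i) / a i)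
    (p : Fin m → ℂ) (hp : ∀ j, p j = -b j / (a j - 1))
    (α : Fin m → Fin m → Fin m)
    -- condition (i)
    (hi : ∀ i j, i ≠ j → ∀ x ∈ (φ i '' J) ∩ (φ j '' J), a i * x + b i = p (α i j))
    -- condition (ii)
    (hii : ∀ i j k : Fin m, i ≠ j → j ≠ k → i ≠ k →
      ∀ x ∈ (φ i '' J) ∩ (φ j '' J), a k * x + b k ∉ J)
    -- condition (iii)
    (hiii : ∀ j k, j ≠ k → a k * p j + b k ∉ J) :
    ∀ ω τ : ℕ → Fin m, ω 0 ≠ τ 0 → codingMap a b ω = codingMap a b τ →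
      codingMap a b ω ∈ (φ (ω 0) '' J) ∩ (φ (τ 0) '' J) ∧
      a (ω 0) * codingMap a b ω + b (ω 0) = p (α (ω 0) (τ 0)) ∧
      a (τ 0) * codingMap a b ω + b (τ 0) = p (α (τ 0) (ω 0)) ∧
      (∀ n : ℕ, 1 ≤ n → ω n = α (ω 0) (τ 0)) ∧
      (∀ n : ℕ, 1 ≤ n → τ n = α (τ 0) (ω 0)) :=
  stmt12_general a b haexp J hJ φ hφ p hp α hi hiii
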